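/- Let a ∈ ℝ and let F ∈ ℂ[x] be nonzero with Re F(x) ≥ 0 for every x ∈ ℂ with Re x = a. Let k be the number of distinct roots of F with real part equal to a and odd multiplicity. Then: (1) ρ_{>a}(F) ≤ ρ_{<a}(F) + k + 1 and ρ_{<a}(F) ≤ ρ_{>a}(F) + k + 1; in particular ρ_{>a}(F) ≤ ρ_{≤a}(F) + 1 and ρ_{<a}(F) ≤ ρ_{≥a}(F) + 1. (2) If ρ_{>a}(F) = ρ_{<a}(F) + k + 1, then F has odd degree 2d − 1 and the leading coefficient of F is a real number of sign (−1)^d; if ρ_{<a}(F) = ρ_{>a}(F) + k + 1, then F has odd degree 2d − 1 and the leading coefficient of F is a real number of sign (−1)^{d−1}. -/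

import Mathlib

/-!
Put `G t = F (a + i t)`: the line `Re x = a` becomes the real axis, and roots of `F` to the left
(right) of it become roots of `G` in the upper (lower) half plane. For real `t`, `G t` is the real
number `∏ (t - x)` over the real roots `x` of `G`, times a nonzero factor whose argument has the
continuous determination `Λ t = arg c + ∑ arg (t - z)` over the non-real roots `z` (`c` the leading
coefficient). So `Re G ≥ 0` says `(∏ (t - x)) * cos (Λ t) ≥ 0`, and after discarding squares,
`(∏ (t - s)) * cos (Λ t) ≥ 0` with `s` running over the `k` real roots of odd multiplicity.
Between consecutive such `s` the sign of `cos Λ` is fixed, so `Λ` moves by at most `π`; to the right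
of all of them `Λ` stays within `π / 2` of a multiple of `2π`, which is `0` because
`Λ (+∞) = arg c ∈ (-π, π]`. Comparing with `Λ (-∞) = arg c + π (ρ_{>a} - ρ_{<a})` gives
`|ρ_{>a} - ρ_{<a}| ≤ k + 1`, with equality only when `arg c = ∓π / 2`. Finally `c` is the leading
coefficient of `F` times `i ^ deg F`, and `deg F ≡ k + ρ_{<a} + ρ_{>a} (mod 2)`.
-/

open Polynomial
open scoped Classical

noncomputable section

/-- Number of roots of `F` (with multiplicity) with real part `< a`. -/
def rhoLT (F : ℂ[X]) (a : ℝ) : ℕ := (F.roots.filter (fun z => z.re < a)).card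

/-- Number of roots of `F` (with multiplicity) with real part `> a`. -/
def rhoGT (F : ℂ[X]) (a : ℝ) : ℕ := (F.roots.filter (fun z => a < z.re)).card

/-- Number of roots of `F` (with multiplicity) with real part `≤ a`. -/
def rhoLE (F : ℂ[X]) (a : ℝ) : ℕ := (F.roots.filter (fun z => z.re ≤ a)).card

/-- Number of roots of `F` (with multiplicity) with real part `≥ a`. -/
def rhoGE (F : ℂ[X]) (a : ℝ) : ℕ := (F.roots.filter (fun z => a ≤ z.re)).card

open Filter Topology Set Real
open scoped Finset

lemma abs_le_pi_div_two_of_cos_nonneg {y : ℝ} (hy : |y| ≤ π) (hcos : 0 ≤ cos y) :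
    |y| ≤ π / 2 := by
  by_contra! h
  have := cos_neg_of_pi_div_two_lt_of_lt h (by linarith [pi_pos])
  rw [cos_abs] at this
  linarith

lemma exists_abs_sub_le_pi_div_two_of_cos_nonneg {I : Set ℝ} (hI : IsPreconnected I)
    {f : ℝ → ℝ} (hf : Continuous f) (hcos : ∀ t ∈ I, 0 ≤ cos (f t)) :
    ∃ n : ℤ, ∀ t ∈ closure I, |f t - n * (2 * π)| ≤ π / 2 := by
  rcases I.eq_empty_or_nonempty with rfl | ⟨t₀, ht₀⟩
  · simp
  set n := round (f t₀ / (2 * π))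
  have hcos_sub (t : ℝ) : cos (f t - n * (2 * π)) = cos (f t) := cos_sub_int_mul_two_pi _ _
  have h₀ : |f t₀ - n * (2 * π)| ≤ π := by
    have h2π : 0 < 2 * π := by positivity
    calc |f t₀ - n * (2 * π)| = |f t₀ / (2 * π) - n| * (2 * π) := by
          rw [← abs_of_pos h2π, ← abs_mul, abs_of_pos h2π, sub_mul,
            div_mul_cancel₀ _ h2π.ne']
      _ ≤ 1 / 2 * (2 * π) := by gcongr; exact abs_sub_round _
      _ = π := by ring
  suffices hI' : I ⊆ {t | |f t - n * (2 * π)| ≤ π / 2} from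
    ⟨n, closure_minimal hI'
      (isClosed_le (by fun_prop : Continuous fun t => |f t - n * (2 * π)|) continuous_const)⟩
  intro t ht
  refine abs_le_pi_div_two_of_cos_nonneg ?_ ((hcos_sub t).symm ▸ hcos t ht)
  by_contra! hfar
  -- between `t₀` and `t`, `f` would cross an odd multiple of `π`, where `cos` is `-1`
  obtain ⟨u, hu, hfu⟩ : ∃ u ∈ I, |f u - n * (2 * π)| = π := by
    rcases lt_abs.1 hfar with hfar | hfar
    · obtain ⟨u, hu, hfu⟩ := hI.intermediate_value ht₀ ht hf.continuousOn
        (show n * (2 * π) + π ∈ Icc (f t₀) (f t) by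
          constructor <;> linarith [(abs_le.1 h₀).2])
      exact ⟨u, hu, by rw [hfu]; simp [pi_pos.le]⟩
    · obtain ⟨u, hu, hfu⟩ := hI.intermediate_value ht ht₀ hf.continuousOn
        (show n * (2 * π) - π ∈ Icc (f t) (f t₀) by
          constructor <;> linarith [(abs_le.1 h₀).1])
      exact ⟨u, hu, by rw [hfu]; simp [pi_pos.le]⟩
  have : cos (f u) = -1 := by
    rw [← hcos_sub, ← cos_abs, hfu, cos_pi]
  linarith [hcos u hu]

lemma abs_sub_le_pi_of_cos_nonneg {I : Set ℝ} (hI : IsPreconnected I) {f : ℝ → ℝ}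
    (hf : Continuous f) (hcos : ∀ t ∈ I, 0 ≤ cos (f t)) {x y : ℝ} (hx : x ∈ closure I)
    (hy : y ∈ closure I) : |f x - f y| ≤ π := by
  obtain ⟨n, hn⟩ := exists_abs_sub_le_pi_div_two_of_cos_nonneg hI hf hcos
  have hx' := abs_le.1 (hn x hx)
  have hy' := abs_le.1 (hn y hy)
  rw [abs_le]
  constructor <;> linarith

lemma abs_sub_le_pi_of_prod_mul_cos_nonneg {T : Finset ℝ} {f : ℝ → ℝ} (hf : Continuous f)
    (h : ∀ t, 0 ≤ (∏ s ∈ T, (t - s)) * cos (f t)) {x y : ℝ} (hxy : x < y)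
    (hT : ∀ s ∈ T, s ∉ Ioo x y) : |f x - f y| ≤ π := by
  obtain ⟨u, hu⟩ : (Ioo x y).Nonempty := nonempty_Ioo.2 hxy
  have hsign (t : ℝ) (ht : t ∈ Ioo x y) : 0 < (∏ s ∈ T, (t - s)) * ∏ s ∈ T, (u - s) := by
    rw [← Finset.prod_mul_distrib]
    refine Finset.prod_pos fun s hs => ?_
    rcases le_or_gt s x with hsx | hxs
    · exact mul_pos (by linarith [ht.1]) (by linarith [hu.1])
    · have : y ≤ s := not_lt.1 fun hsy => hT s hs ⟨hxs, hsy⟩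
      exact mul_pos_of_neg_of_neg (by linarith [ht.2]) (by linarith [hu.2])
  have hmem : x ∈ closure (Ioo x y) ∧ y ∈ closure (Ioo x y) := by
    rw [closure_Ioo hxy.ne]
    exact ⟨left_mem_Icc.2 hxy.le, right_mem_Icc.2 hxy.le⟩
  rcases lt_or_gt_of_ne (right_ne_zero_of_mul (hsign u hu).ne') with hneg | hpos
  · have := abs_sub_le_pi_of_cos_nonneg isPreconnected_Ioo (hf.add continuous_const)
      (f := fun t => f t + π) (fun t ht => by
        have := h t; have := hsign t ht
        rw [cos_add_pi]; nlinarith) hmem.1 hmem.2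
    simpa using this
  · exact abs_sub_le_pi_of_cos_nonneg isPreconnected_Ioo hf (fun t ht => by
      have := h t; have := hsign t ht
      nlinarith) hmem.1 hmem.2

theorem exists_abs_sub_le_of_prod_mul_cos_nonneg (T : Finset ℝ) {f : ℝ → ℝ}
    (hf : Continuous f) (h : ∀ t, 0 ≤ (∏ s ∈ T, (t - s)) * cos (f t)) :
    ∃ n : ℤ, ∀ x, |f x - n * (2 * π)| ≤ (#{s ∈ T | x < s} + 1 / 2) * π := by
  have hI : IsPreconnected {t : ℝ | ∀ s ∈ T, s < t} :=
    Set.OrdConnected.isPreconnected ⟨fun _ ha _ _ _ ht s hs => (ha s hs).trans_le ht.1⟩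
  obtain ⟨n, hn⟩ := exists_abs_sub_le_pi_div_two_of_cos_nonneg hI hf fun t ht =>
    nonneg_of_mul_nonneg_right (h t) (Finset.prod_pos fun s hs => sub_pos.2 (ht s hs))
  refine ⟨n, fun x => ?_⟩
  induction hm : #{s ∈ T | x < s} generalizing x with
  | zero =>
    have hx : x ∈ closure {t : ℝ | ∀ s ∈ T, s < t} := by
      have hIoi : Ioi x ⊆ {t : ℝ | ∀ s ∈ T, s < t} := fun t ht s hs =>
        (not_lt.1 fun hxs => Finset.notMem_empty s
          (Finset.card_eq_zero.1 hm ▸ Finset.mem_filter.2 ⟨hs, hxs⟩)).trans_lt ht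
      exact closure_mono hIoi (by rw [closure_Ioi]; exact self_mem_Ici)
    simpa [div_eq_inv_mul] using hn x hx
  | succ m ih =>
    have hne : {s ∈ T | x < s}.Nonempty := Finset.card_pos.1 (by omega)
    set s := Finset.min' _ hne
    obtain ⟨-, hxs⟩ := Finset.mem_filter.1 (Finset.min'_mem _ hne)
    have hpiece : |f x - f s| ≤ π := abs_sub_le_pi_of_prod_mul_cos_nonneg hf h hxs
      fun s' hs' hmem => (Finset.min'_le _ s' (Finset.mem_filter.2 ⟨hs', hmem.1⟩)).not_gt hmem.2
    have hcard : #{s' ∈ T | s < s'} = m := by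
      have : {s' ∈ T | s < s'} = {s' ∈ T | x < s'}.erase s := by
        ext s'
        simp only [Finset.mem_filter, Finset.mem_erase]
        constructor
        · rintro ⟨hs', hss'⟩
          exact ⟨hss'.ne', hs', hxs.trans hss'⟩
        · rintro ⟨hne', hs', hxs'⟩
          exact ⟨hs', lt_of_le_of_ne (Finset.min'_le _ s' (Finset.mem_filter.2 ⟨hs', hxs'⟩))
            hne'.symm⟩
      rw [this, Finset.card_erase_of_mem (Finset.min'_mem _ hne), hm]
      rfl
    have := abs_le.1 (ih s hcard)
    have := abs_le.1 hpiece
    push_cast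
    rw [abs_le]
    constructor <;> linarith

namespace Multiset

lemma filter_or_eq_add {α : Type*} (p q : α → Prop) [DecidablePred p] [DecidablePred q]
    {s : Multiset α} (h : ∀ a ∈ s, ¬(p a ∧ q a)) :
    s.filter (fun a => p a ∨ q a) = s.filter p + s.filter q := by
  rw [filter_add_filter, filter_eq_nil.2 h, add_zero]

lemma prod_map_eq_prod_filter_odd_count_mul_sq {α M : Type*} [DecidableEq α] [CommMonoid M]
    (s : Multiset α) (f : α → M) :
    (s.map f).prod = (∏ a ∈ s.toFinset with Odd (s.count a), f a) *
      (∏ a ∈ s.toFinset, f a ^ (s.count a / 2)) ^ 2 := by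
  rw [Finset.prod_multiset_map_count, Finset.prod_filter, ← Finset.prod_pow,
    ← Finset.prod_mul_distrib]
  refine Finset.prod_congr rfl fun a _ => ?_
  conv_lhs => rw [← Nat.mod_add_div (s.count a) 2, pow_add, pow_mul']
  rcases Nat.mod_two_eq_zero_or_one (s.count a) with h | h <;> simp [h, Nat.odd_iff]

lemma card_modEq_card_filter_odd_count {α : Type*} [DecidableEq α] (s : Multiset α) :
    card s ≡ #{a ∈ s.toFinset | Odd (s.count a)} [MOD 2] := by
  rw [← toFinset_sum_count_eq, Finset.card_filter, Nat.ModEq, Finset.sum_nat_mod,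
    Finset.sum_nat_mod _ _ (fun a => if Odd (s.count a) then 1 else 0)]
  congr 1
  refine Finset.sum_congr rfl fun a _ => ?_
  rcases Nat.mod_two_eq_zero_or_one (s.count a) with h | h <;> simp [h, Nat.odd_iff]

end Multiset

open Complex

lemma Complex.prod_eq_norm_mul_exp_sum_arg (w : Multiset ℂ) :
    w.prod = ‖w.prod‖ * exp ((w.map arg).sum * I) := by
  induction w using Multiset.induction_on with
  | empty => simp
  | cons z w ih =>
    rw [Multiset.prod_cons, Multiset.map_cons, Multiset.sum_cons, norm_mul, ofReal_mul,
      ofReal_add, add_mul, exp_add]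
    conv_lhs => rw [← norm_mul_exp_arg_mul_I z, ih]
    ring

lemma Complex.tendsto_arg_ofReal_sub_atTop (z : ℂ) :
    Tendsto (fun t : ℝ => arg (t - z)) atTop (𝓝 0) := by
  have hlim : Tendsto (fun t : ℝ => 1 - z * ((t⁻¹ : ℝ) : ℂ)) atTop (𝓝 1) := by
    simpa using tendsto_const_nhds.sub
      (tendsto_const_nhds.mul ((continuous_ofReal.tendsto 0).comp tendsto_inv_atTop_zero))
  have harg := (continuousAt_arg (by simp : (1 : ℂ) ∈ slitPlane)).tendsto.comp hlim
  rw [arg_one] at harg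
  refine harg.congr' ?_
  filter_upwards [eventually_gt_atTop 0] with t ht
  have : (t : ℂ) - z = (t : ℂ) * (1 - z * ((t⁻¹ : ℝ) : ℂ)) := by
    have : (t : ℂ) ≠ 0 := by exact_mod_cast ht.ne'
    push_cast
    field_simp
  rw [Function.comp_apply, this, arg_real_mul _ ht]

lemma Complex.tendsto_arg_ofReal_sub_atBot_of_im_pos {z : ℂ} (hz : 0 < z.im) :
    Tendsto (fun t : ℝ => arg (t - z)) atBot (𝓝 (-π)) := by
  have := ((tendsto_arg_ofReal_sub_atTop (-z)).comp tendsto_neg_atBot_atTop).sub_const π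
  rw [zero_sub] at this
  refine this.congr fun t => ?_
  have : (t : ℂ) - z = -(((-t : ℝ) : ℂ) - -z) := by push_cast; ring
  rw [Function.comp_apply, this, arg_neg_eq_arg_sub_pi_of_im_pos (by simpa using hz)]

lemma Complex.tendsto_arg_ofReal_sub_atBot_of_im_neg {z : ℂ} (hz : z.im < 0) :
    Tendsto (fun t : ℝ => arg (t - z)) atBot (𝓝 π) := by
  have := ((tendsto_arg_ofReal_sub_atTop (-z)).comp tendsto_neg_atBot_atTop).add_const π
  rw [zero_add] at this
  refine this.congr fun t => ?_
  have : (t : ℂ) - z = -(((-t : ℝ) : ℂ) - -z) := by push_cast; ring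
  rw [Function.comp_apply, this, arg_neg_eq_arg_add_pi_of_im_neg (by simpa using hz)]

namespace Polynomial

variable (G : ℂ[X])

def upperRootCount : ℕ := (G.roots.filter fun z => 0 < z.im).card

def lowerRootCount : ℕ := (G.roots.filter fun z => z.im < 0).card

def realRoots : Multiset ℂ := G.roots.filter fun z => z.im = 0

def oddRealRoots : Finset ℂ :=
  G.roots.toFinset.filter fun z => z.im = 0 ∧ Odd (G.rootMultiplicity z)

/-- The continuous argument `Λ` of the non-real part of `G` along the real axis. -/
def nonrealRootArg (t : ℝ) : ℝ :=
  arg G.leadingCoeff + ((G.roots.filter fun z => 0 < z.im).map fun z => arg (t - z)).sum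
    + ((G.roots.filter fun z => z.im < 0).map fun z => arg (t - z)).sum

lemma roots_eq_realRoots_add : G.roots =
    G.realRoots + G.roots.filter (fun z => 0 < z.im) + G.roots.filter (fun z => z.im < 0) := by
  rw [add_assoc, ← Multiset.filter_or_eq_add _ _ fun z _ h => h.1.not_gt h.2, realRoots]
  conv_lhs => rw [← Multiset.filter_add_not (fun z : ℂ => z.im = 0) G.roots]
  congr 1
  exact Multiset.filter_congr fun z _ =>
    ⟨fun h => (Ne.lt_or_gt h).symm, fun h => h.elim ne_of_gt ne_of_lt⟩

lemma toFinset_realRoots_filter_odd_count :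
    G.realRoots.toFinset.filter (fun z => Odd (G.realRoots.count z)) = G.oddRealRoots := by
  refine Finset.ext fun z => ?_
  rw [Finset.mem_filter, Multiset.mem_toFinset, realRoots, Multiset.mem_filter, oddRealRoots,
    Finset.mem_filter, Multiset.mem_toFinset, ← count_roots]
  constructor
  · rintro ⟨⟨hz, him⟩, hodd⟩
    rw [Multiset.count_filter_of_pos (p := fun z : ℂ => z.im = 0) him] at hodd
    exact ⟨hz, him, hodd⟩
  · rintro ⟨hz, him, hodd⟩
    exact ⟨⟨hz, him⟩, by rwa [Multiset.count_filter_of_pos (p := fun z : ℂ => z.im = 0) him]⟩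

lemma injOn_re_oddRealRoots : Set.InjOn re G.oddRealRoots := fun _ hz _ hw h =>
  Complex.ext h ((Finset.mem_filter.1 hz).2.1.trans (Finset.mem_filter.1 hw).2.1.symm)

lemma natDegree_modEq :
    G.natDegree ≡ #G.oddRealRoots + G.upperRootCount + G.lowerRootCount [MOD 2] := by
  rw [← IsAlgClosed.card_roots_eq_natDegree, roots_eq_realRoots_add, Multiset.card_add,
    Multiset.card_add, ← toFinset_realRoots_filter_odd_count]
  exact ((Multiset.card_modEq_card_filter_odd_count _).add_right _).add_right _

lemma prod_realRoots_mul_cos_nonneg (hG : G ≠ 0) (hre : ∀ t : ℝ, 0 ≤ (G.eval (t : ℂ)).re)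
    (t : ℝ) : 0 ≤ (G.realRoots.map fun z => t - z.re).prod * Real.cos (G.nonrealRootArg t) := by
  set w : Multiset ℂ := G.leadingCoeff ::ₘ
    ((G.roots.filter fun z => 0 < z.im).map (fun z => (t : ℂ) - z) +
      (G.roots.filter fun z => z.im < 0).map (fun z => (t : ℂ) - z))
  have hw : (w.map arg).sum = G.nonrealRootArg t := by
    simp [w, nonrealRootArg, Multiset.map_map, add_assoc]
  have heval : G.eval (t : ℂ) = ((G.realRoots.map fun z => t - z.re).prod : ℝ) * w.prod := by
    rw [(IsAlgClosed.splits G).eval_eq_prod_roots, roots_eq_realRoots_add]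
    have hreal : (G.realRoots.map fun z => (t : ℂ) - z).prod =
        ((G.realRoots.map fun z => t - z.re).prod : ℝ) := by
      rw [show (((G.realRoots.map fun z => t - z.re).prod : ℝ) : ℂ) = ofRealHom _ from rfl,
        map_multiset_prod, Multiset.map_map]
      refine congrArg _ (Multiset.map_congr rfl fun z hz => ?_)
      have him : z.im = 0 := (Multiset.mem_filter.1 hz).2
      apply Complex.ext <;> simp [him]
    simp only [Multiset.map_add, Multiset.prod_add, hreal, w, Multiset.prod_cons]
    ring
  have hw0 : 0 < ‖w.prod‖ := by
    refine norm_pos_iff.2 (Multiset.prod_ne_zero ?_)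
    simp only [w, Multiset.mem_cons, Multiset.mem_add, Multiset.mem_map, Multiset.mem_filter,
      not_or]
    refine ⟨fun h => leadingCoeff_ne_zero.2 hG h.symm, ?_, ?_⟩ <;>
    · rintro ⟨z, ⟨-, hz⟩, h⟩
      have := congrArg im h
      simp at this
      linarith
  have := hre t
  rw [heval, re_ofReal_mul, prod_eq_norm_mul_exp_sum_arg, re_ofReal_mul, exp_ofReal_mul_I_re,
    hw, mul_left_comm] at this
  exact (mul_nonneg_iff_of_pos_left hw0).1 this

lemma continuous_nonrealRootArg : Continuous G.nonrealRootArg := by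
  have hcont {z : ℂ} (hz : z.im ≠ 0) : Continuous fun t : ℝ => arg (t - z) :=
    continuous_iff_continuousAt.2 fun t => (continuousAt_arg (mem_slitPlane_iff.2
      (Or.inr (by simpa using hz)))).comp (by fun_prop)
  exact (continuous_const.add (continuous_multiset_sum _ fun z hz =>
    hcont (Multiset.mem_filter.1 hz).2.ne')).add
    (continuous_multiset_sum _ fun z hz => hcont (Multiset.mem_filter.1 hz).2.ne)

lemma tendsto_nonrealRootArg_atTop :
    Tendsto G.nonrealRootArg atTop (𝓝 (arg G.leadingCoeff)) := by
  unfold nonrealRootArg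
  simpa using (tendsto_const_nhds.add
    (tendsto_multiset_sum _ fun z _ => tendsto_arg_ofReal_sub_atTop z)).add
    (tendsto_multiset_sum _ fun z _ => tendsto_arg_ofReal_sub_atTop z)

lemma tendsto_nonrealRootArg_atBot : Tendsto G.nonrealRootArg atBot
    (𝓝 (arg G.leadingCoeff + π * (G.lowerRootCount - G.upperRootCount))) := by
  have := (tendsto_const_nhds (x := arg G.leadingCoeff)).add
    (tendsto_multiset_sum (G.roots.filter fun z => 0 < z.im) fun z hz =>
      tendsto_arg_ofReal_sub_atBot_of_im_pos (Multiset.mem_filter.1 hz).2) |>.add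
    (tendsto_multiset_sum (G.roots.filter fun z => z.im < 0) fun z hz =>
      tendsto_arg_ofReal_sub_atBot_of_im_neg (Multiset.mem_filter.1 hz).2)
  unfold nonrealRootArg
  convert this using 2
  simp [upperRootCount, lowerRootCount, Multiset.map_const']
  ring

lemma prod_oddRealRoots_mul_cos_nonneg (hG : G ≠ 0) (hre : ∀ t : ℝ, 0 ≤ (G.eval (t : ℂ)).re)
    (t : ℝ) : 0 ≤ (∏ s ∈ G.oddRealRoots.image re, (t - s)) * Real.cos (G.nonrealRootArg t) := by
  set S : Finset ℝ := G.realRoots.toFinset.image re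
  -- off the real roots, the even part of the real factor is a nonzero square
  have hoff : (S : Set ℝ)ᶜ ⊆
      {t | 0 ≤ (∏ s ∈ G.oddRealRoots.image re, (t - s)) * Real.cos (G.nonrealRootArg t)} := by
    intro t ht
    have := G.prod_realRoots_mul_cos_nonneg hG hre t
    rw [Multiset.prod_map_eq_prod_filter_odd_count_mul_sq, toFinset_realRoots_filter_odd_count,
      ← Finset.prod_image G.injOn_re_oddRealRoots] at this
    have hsq :
        0 < (∏ z ∈ G.realRoots.toFinset, (t - z.re) ^ (G.realRoots.count z / 2)) ^ 2 := by
      refine lt_of_le_of_ne (sq_nonneg _) (pow_ne_zero 2 (Finset.prod_ne_zero_iff.2 fun z hz =>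
        pow_ne_zero _ (sub_ne_zero.2 fun h => ht (by
          rw [Finset.mem_coe, h]; exact Finset.mem_image_of_mem re hz)))).symm
    rw [mul_right_comm] at this
    exact (mul_nonneg_iff_of_pos_right hsq).1 this
  have hdense : Dense ((S : Set ℝ)ᶜ) := by
    simpa [Set.compl_eq_univ_sdiff] using dense_univ.sdiff_finite S.finite_toSet
  have hclosed := closure_minimal hoff (isClosed_le continuous_const (by
    have := G.continuous_nonrealRootArg
    fun_prop))
  rw [hdense.closure_eq] at hclosed
  exact hclosed (Set.mem_univ t)

variable {G}

theorem abs_arg_leadingCoeff_le (hG : G ≠ 0) (hre : ∀ t : ℝ, 0 ≤ (G.eval (t : ℂ)).re) :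
    |arg G.leadingCoeff| ≤ π / 2 ∧
      |arg G.leadingCoeff + π * (G.lowerRootCount - G.upperRootCount)| ≤
        (#G.oddRealRoots + 1 / 2) * π := by
  obtain ⟨n, hn⟩ := exists_abs_sub_le_of_prod_mul_cos_nonneg _ G.continuous_nonrealRootArg
    (G.prod_oddRealRoots_mul_cos_nonneg hG hre)
  obtain ⟨M, hM⟩ := (G.oddRealRoots.image re).bddAbove
  have htop : |arg G.leadingCoeff - n * (2 * π)| ≤ π / 2 := by
    refine le_of_tendsto (G.tendsto_nonrealRootArg_atTop.sub_const _).abs ?_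
    filter_upwards [eventually_ge_atTop M] with t ht
    have : #{s ∈ G.oddRealRoots.image re | t < s} = 0 :=
      Finset.card_eq_zero.2 (Finset.filter_eq_empty_iff.2 fun s hs hts =>
        (hM (Finset.mem_coe.2 hs)).not_gt (ht.trans_lt hts))
    simpa [this, div_eq_inv_mul] using hn t
  have hbot : |arg G.leadingCoeff + π * (G.lowerRootCount - G.upperRootCount) - n * (2 * π)| ≤
      (#G.oddRealRoots + 1 / 2) * π := by
    refine le_of_tendsto (G.tendsto_nonrealRootArg_atBot.sub_const _).abs
      (Eventually.of_forall fun t => (hn t).trans ?_)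
    rw [← Finset.card_image_of_injOn G.injOn_re_oddRealRoots]
    gcongr
    exact Finset.filter_subset _ _
  obtain rfl : n = 0 := by
    have := abs_le.1 htop
    have := neg_pi_lt_arg G.leadingCoeff
    have := arg_le_pi G.leadingCoeff
    have h₁ : (n : ℝ) < 1 := by nlinarith [pi_pos]
    have h₂ : (-1 : ℝ) < n := by nlinarith [pi_pos]
    have : n < 1 := by exact_mod_cast h₁
    have : -1 < n := by exact_mod_cast h₂
    omega
  simp only [Int.cast_zero, zero_mul, sub_zero] at htop hbot
  exact ⟨htop, hbot⟩

theorem lowerRootCount_le (hG : G ≠ 0) (hre : ∀ t : ℝ, 0 ≤ (G.eval (t : ℂ)).re) :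
    G.lowerRootCount ≤ G.upperRootCount + #G.oddRealRoots + 1 := by
  obtain ⟨h₁, h₂⟩ := abs_arg_leadingCoeff_le hG hre
  have h : π * (G.lowerRootCount : ℝ) ≤ π * (G.upperRootCount + #G.oddRealRoots + 1) := by
    linarith [(abs_le.1 h₁).1, (abs_le.1 h₂).2]
  exact_mod_cast le_of_mul_le_mul_left h pi_pos

theorem upperRootCount_le (hG : G ≠ 0) (hre : ∀ t : ℝ, 0 ≤ (G.eval (t : ℂ)).re) :
    G.upperRootCount ≤ G.lowerRootCount + #G.oddRealRoots + 1 := by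
  obtain ⟨h₁, h₂⟩ := abs_arg_leadingCoeff_le hG hre
  have h : π * (G.upperRootCount : ℝ) ≤ π * (G.lowerRootCount + #G.oddRealRoots + 1) := by
    linarith [(abs_le.1 h₁).2, (abs_le.1 h₂).1]
  exact_mod_cast le_of_mul_le_mul_left h pi_pos

theorem odd_natDegree_of_lowerRootCount_eq
    (h : G.lowerRootCount = G.upperRootCount + #G.oddRealRoots + 1) : Odd G.natDegree := by
  have := G.natDegree_modEq
  rw [Nat.odd_iff]
  unfold Nat.ModEq at this
  omega

theorem odd_natDegree_of_upperRootCount_eq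
    (h : G.upperRootCount = G.lowerRootCount + #G.oddRealRoots + 1) : Odd G.natDegree := by
  have := G.natDegree_modEq
  rw [Nat.odd_iff]
  unfold Nat.ModEq at this
  omega

theorem arg_leadingCoeff_of_lowerRootCount_eq (hG : G ≠ 0)
    (hre : ∀ t : ℝ, 0 ≤ (G.eval (t : ℂ)).re)
    (h : G.lowerRootCount = G.upperRootCount + #G.oddRealRoots + 1) :
    arg G.leadingCoeff = -(π / 2) := by
  obtain ⟨h₁, h₂⟩ := abs_arg_leadingCoeff_le hG hre
  have h' : (G.lowerRootCount : ℝ) = G.upperRootCount + #G.oddRealRoots + 1 := by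
    exact_mod_cast h
  rw [h'] at h₂
  linarith [(abs_le.1 h₁).1, (abs_le.1 h₂).2]

theorem arg_leadingCoeff_of_upperRootCount_eq (hG : G ≠ 0)
    (hre : ∀ t : ℝ, 0 ≤ (G.eval (t : ℂ)).re)
    (h : G.upperRootCount = G.lowerRootCount + #G.oddRealRoots + 1) :
    arg G.leadingCoeff = π / 2 := by
  obtain ⟨h₁, h₂⟩ := abs_arg_leadingCoeff_le hG hre
  have h' : (G.upperRootCount : ℝ) = G.lowerRootCount + #G.oddRealRoots + 1 := by
    exact_mod_cast h
  rw [h'] at h₂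
  linarith [(abs_le.1 h₁).2, (abs_le.1 h₂).1]

theorem leadingCoeff_eq_neg_I_mul_of_lowerRootCount_eq (hG : G ≠ 0)
    (hre : ∀ t : ℝ, 0 ≤ (G.eval (t : ℂ)).re)
    (h : G.lowerRootCount = G.upperRootCount + #G.oddRealRoots + 1) :
    G.leadingCoeff = -I * ‖G.leadingCoeff‖ := by
  conv_lhs => rw [← norm_mul_exp_arg_mul_I G.leadingCoeff,
    arg_leadingCoeff_of_lowerRootCount_eq hG hre h]
  push_cast
  rw [← neg_div, exp_neg_pi_div_two_mul_I, mul_comm]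

theorem leadingCoeff_eq_I_mul_of_upperRootCount_eq (hG : G ≠ 0)
    (hre : ∀ t : ℝ, 0 ≤ (G.eval (t : ℂ)).re)
    (h : G.upperRootCount = G.lowerRootCount + #G.oddRealRoots + 1) :
    G.leadingCoeff = I * ‖G.leadingCoeff‖ := by
  conv_lhs => rw [← norm_mul_exp_arg_mul_I G.leadingCoeff,
    arg_leadingCoeff_of_upperRootCount_eq hG hre h]
  push_cast
  rw [exp_pi_div_two_mul_I, mul_comm]

end Polynomial

namespace Polynomial

variable (F : ℂ[X]) (a : ℝ)

lemma roots_comp_I_mul_X_add_C :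
    (F.comp (C I * X + C (a : ℂ))).roots = F.roots.map fun z => -I * (z - a) := by
  rw [roots_comp_C_mul_X_add_C _ _ _ (isUnit_iff_ne_zero.2 I_ne_zero)]
  simp [Ring.inverse_eq_inv', inv_I]

lemma natDegree_comp_I_mul_X_add_C :
    (F.comp (C I * X + C (a : ℂ))).natDegree = F.natDegree := by
  rw [natDegree_comp, natDegree_linear I_ne_zero, mul_one]

lemma leadingCoeff_comp_I_mul_X_add_C :
    (F.comp (C I * X + C (a : ℂ))).leadingCoeff = F.leadingCoeff * I ^ F.natDegree := by
  rw [leadingCoeff_comp (by rw [natDegree_linear I_ne_zero]; exact one_ne_zero),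
    leadingCoeff_linear I_ne_zero]

lemma upperRootCount_comp_I_mul_X_add_C :
    (F.comp (C I * X + C (a : ℂ))).upperRootCount = rhoLT F a := by
  rw [upperRootCount, roots_comp_I_mul_X_add_C, Multiset.filter_map, Multiset.card_map, rhoLT]
  congr 1
  exact Multiset.filter_congr fun z _ => by simp

lemma lowerRootCount_comp_I_mul_X_add_C :
    (F.comp (C I * X + C (a : ℂ))).lowerRootCount = rhoGT F a := by
  rw [lowerRootCount, roots_comp_I_mul_X_add_C, Multiset.filter_map, Multiset.card_map, rhoGT]
  congr 1
  exact Multiset.filter_congr fun z _ => by simp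

lemma card_oddRealRoots_comp_I_mul_X_add_C :
    #(F.comp (C I * X + C (a : ℂ))).oddRealRoots =
      (F.roots.toFinset.filter fun z => z.re = a ∧ Odd (F.rootMultiplicity z)).card := by
  have hinj : Function.Injective fun z : ℂ => -I * (z - a) := fun z w h => by
    simpa using h
  rw [oddRealRoots, roots_comp_I_mul_X_add_C, Multiset.toFinset_map, Finset.filter_image,
    Finset.card_image_of_injective _ hinj]
  congr 1
  refine Finset.filter_congr fun z _ => ?_
  rw [← count_roots, roots_comp_I_mul_X_add_C, Multiset.count_map_eq_count' _ _ hinj, count_roots]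
  simp [sub_eq_zero, eq_comm]

end Polynomial

lemma rhoLE_eq_rhoLT_add (F : ℂ[X]) (a : ℝ) :
    rhoLE F a = rhoLT F a + (F.roots.filter fun z => z.re = a).card := by
  rw [rhoLE, rhoLT, ← Multiset.card_add,
    ← Multiset.filter_or_eq_add _ _ fun z _ h => h.1.ne h.2]
  exact congrArg _ (Multiset.filter_congr fun z _ => le_iff_lt_or_eq)

lemma rhoGE_eq_rhoGT_add (F : ℂ[X]) (a : ℝ) :
    rhoGE F a = rhoGT F a + (F.roots.filter fun z => z.re = a).card := by
  rw [rhoGE, rhoGT, ← Multiset.card_add,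
    ← Multiset.filter_or_eq_add _ _ fun z _ h => h.1.ne' h.2]
  exact congrArg _ (Multiset.filter_congr fun z _ => by rw [le_iff_lt_or_eq, eq_comm])

lemma card_filter_odd_rootMultiplicity_le (F : ℂ[X]) (a : ℝ) :
    (F.roots.toFinset.filter fun z => z.re = a ∧ Odd (F.rootMultiplicity z)).card ≤
      (F.roots.filter fun z => z.re = a).card :=
  calc _ ≤ (F.roots.filter fun z => z.re = a).toFinset.card := Finset.card_le_card fun z hz => by
        simp only [Finset.mem_filter, Multiset.mem_toFinset, Multiset.mem_filter] at hz ⊢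
        exact ⟨hz.1, hz.2.1⟩
    _ ≤ _ := Multiset.toFinset_card_le _

lemma exists_eq_neg_one_pow_mul_of_mul_I_pow_eq {c : ℂ} {n : ℕ} (hn : Odd n) (hc : c ≠ 0)
    (h : c * I ^ n = -I * ‖c‖) :
    ∃ d : ℕ, 1 ≤ d ∧ n = 2 * d - 1 ∧ ∃ r : ℝ, 0 < r ∧ c = (-1) ^ d * r := by
  obtain ⟨e, rfl⟩ := hn
  refine ⟨e + 1, by omega, by omega, ‖c‖, norm_pos_iff.2 hc, ?_⟩
  have h₁ : I ^ (2 * e + 1) * I = (-1) ^ (e + 1) := by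
    rw [← pow_succ, show 2 * e + 1 + 1 = 2 * (e + 1) by ring, pow_mul, I_sq]
  have h₂ : ((-1 : ℂ) ^ (e + 1)) ^ 2 = 1 := by rw [← pow_mul, mul_comm, pow_mul]; simp
  linear_combination ((-1) ^ (e + 1) * I) * h + (-(-1) ^ (e + 1) * c) * h₁ + (-c) * h₂ +
    (-(-1) ^ (e + 1) * (‖c‖ : ℂ)) * I_sq

lemma exists_eq_neg_one_pow_pred_mul_of_mul_I_pow_eq {c : ℂ} {n : ℕ} (hn : Odd n) (hc : c ≠ 0)
    (h : c * I ^ n = I * ‖c‖) :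
    ∃ d : ℕ, 1 ≤ d ∧ n = 2 * d - 1 ∧ ∃ r : ℝ, 0 < r ∧ c = (-1) ^ (d - 1) * r := by
  obtain ⟨d, hd, hdn, r, hr, hneg⟩ :=
    exists_eq_neg_one_pow_mul_of_mul_I_pow_eq hn (neg_ne_zero.2 hc)
      (by rw [norm_neg, neg_mul, h]; ring)
  refine ⟨d, hd, hdn, r, hr, ?_⟩
  obtain ⟨e, rfl⟩ : ∃ e, d = e + 1 := ⟨d - 1, by omega⟩
  rw [Nat.add_sub_cancel, ← neg_neg c, hneg, pow_succ]
  ring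

theorem stmt15 (a : ℝ) (F : ℂ[X]) (hF : F ≠ 0)
    (hpos : ∀ x : ℂ, x.re = a → 0 ≤ (F.eval x).re)
    (k : ℕ)
    (hk : k = (F.roots.toFinset.filter
      (fun z => z.re = a ∧ Odd (F.rootMultiplicity z))).card) :
    (rhoGT F a ≤ rhoLT F a + k + 1 ∧ rhoLT F a ≤ rhoGT F a + k + 1 ∧
      rhoGT F a ≤ rhoLE F a + 1 ∧ rhoLT F a ≤ rhoGE F a + 1) ∧
    (rhoGT F a = rhoLT F a + k + 1 →
      ∃ d : ℕ, 1 ≤ d ∧ F.natDegree = 2 * d - 1 ∧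
        ∃ r : ℝ, 0 < r ∧ F.leadingCoeff = (-1 : ℂ) ^ d * (r : ℂ)) ∧
    (rhoLT F a = rhoGT F a + k + 1 →
      ∃ d : ℕ, 1 ≤ d ∧ F.natDegree = 2 * d - 1 ∧
        ∃ r : ℝ, 0 < r ∧ F.leadingCoeff = (-1 : ℂ) ^ (d - 1) * (r : ℂ)) := by
  set G := F.comp (C I * X + C (a : ℂ))
  have hlc : G.leadingCoeff = F.leadingCoeff * I ^ F.natDegree :=
    leadingCoeff_comp_I_mul_X_add_C F a
  have hG : G ≠ 0 := leadingCoeff_ne_zero.1 <| hlc ▸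
    mul_ne_zero (leadingCoeff_ne_zero.2 hF) (pow_ne_zero _ I_ne_zero)
  have hre (t : ℝ) : 0 ≤ (G.eval (t : ℂ)).re := by
    simpa [G, eval_comp] using hpos (I * t + a) (by simp)
  have hU : G.upperRootCount = rhoLT F a := upperRootCount_comp_I_mul_X_add_C F a
  have hL : G.lowerRootCount = rhoGT F a := lowerRootCount_comp_I_mul_X_add_C F a
  have hK : #G.oddRealRoots = k := hk ▸ card_oddRealRoots_comp_I_mul_X_add_C F a
  have hkM := card_filter_odd_rootMultiplicity_le F a
  have hdeg := natDegree_comp_I_mul_X_add_C F a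
  refine ⟨⟨?_, ?_, ?_, ?_⟩, fun h => ?_, fun h => ?_⟩
  · have := lowerRootCount_le hG hre; omega
  · have := upperRootCount_le hG hre; omega
  · have := lowerRootCount_le hG hre; have := rhoLE_eq_rhoLT_add F a; omega
  · have := upperRootCount_le hG hre; have := rhoGE_eq_rhoGT_add F a; omega
  · have hc := leadingCoeff_eq_neg_I_mul_of_lowerRootCount_eq hG hre (by omega)
    rw [hlc, norm_mul, norm_pow, norm_I, one_pow, mul_one] at hc
    exact exists_eq_neg_one_pow_mul_of_mul_I_pow_eq
      (hdeg ▸ odd_natDegree_of_lowerRootCount_eq (G := G) (by omega))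
      (leadingCoeff_ne_zero.2 hF) hc
  · have hc := leadingCoeff_eq_I_mul_of_upperRootCount_eq hG hre (by omega)
    rw [hlc, norm_mul, norm_pow, norm_I, one_pow, mul_one] at hc
    exact exists_eq_neg_one_pow_pred_mul_of_mul_I_pow_eq
      (hdeg ▸ odd_natDegree_of_upperRootCount_eq (G := G) (by omega))
      (leadingCoeff_ne_zero.2 hF) hc

end
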